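/- Let p be a prime with p ≡ 2 (mod 3). Then -U_p = Q^{p(p+1)/3} A^{-1} Q^{(p+1)/3} A^{-p}, where A = [[1,0],[1,1]], Q = [[1,3/p],[0,1]], U_p = [[p,0],[0,1/p]]. In particular U_p^2 lies in the subgroup generated by A and Q. -/

import Mathlib

/-! Writing `p + 1 = 3k`, the word is `Q(p+1) L(-1) Q((p+1)/p) L(-p)` with `L(x) = [[1,0],[x,1]]`
and `A = L(1)`, since both families of unipotents are additive in their parameter. Multiplying
out these four unipotents gives `-U_p`, and the sign disappears on squaring. -/

abbrev SL2Q := Matrix.SpecialLinearGroup (Fin 2) ℚ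

/-- A = [[1,0],[1,1]] -/
def matA : SL2Q := ⟨!![1,0;1,1], by norm_num [Matrix.det_fin_two_of]⟩
/-- B = [[0,1],[-1,0]] -/
def matB : SL2Q := ⟨!![0,1;-1,0], by norm_num [Matrix.det_fin_two_of]⟩
/-- Q_q = [[1,q],[0,1]] -/
def matQ (q : ℚ) : SL2Q := ⟨!![1,q;0,1], by norm_num [Matrix.det_fin_two_of]⟩
/-- U_p = [[p,0],[0,1/p]] -/
def matU (p : ℚ) (hp : p ≠ 0) : SL2Q := ⟨!![p,0;0,p⁻¹], by rw [Matrix.det_fin_two_of]; field_simp; norm_num⟩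
/-- lower unipotent [[1,0],[x,1]] -/
def matL (x : ℚ) : SL2Q := ⟨!![1,0;x,1], by norm_num [Matrix.det_fin_two_of]⟩

namespace Matrix.SpecialLinearGroup

lemma sq_eq_sq_of_coe_eq_neg {n R : Type*} [Fintype n] [DecidableEq n]
    [CommRing R] {g h : SpecialLinearGroup n R} (hgh : (g : Matrix n n R) = -h) :
    g ^ 2 = h ^ 2 := by
  ext1
  simp only [coe_pow, hgh, neg_sq]

end Matrix.SpecialLinearGroup

lemma matQ_add (a b : ℚ) : matQ (a + b) = matQ a * matQ b := by
  ext1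
  simp only [Matrix.SpecialLinearGroup.coe_mul]
  simp [matQ, add_comm]

lemma matL_add (a b : ℚ) : matL (a + b) = matL a * matL b := by
  ext1
  simp only [Matrix.SpecialLinearGroup.coe_mul]
  simp [matL]

lemma matQ_zero : matQ 0 = 1 := by
  ext1
  simp [matQ, Matrix.one_fin_two]

lemma matL_zero : matL 0 = 1 := by
  ext1
  simp [matL, Matrix.one_fin_two]

def matQHom : Multiplicative ℚ →* SL2Q where
  toFun q := matQ q.toAdd
  map_one' := matQ_zero
  map_mul' a b := matQ_add a.toAdd b.toAdd

def matLHom : Multiplicative ℚ →* SL2Q where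
  toFun x := matL x.toAdd
  map_one' := matL_zero
  map_mul' a b := matL_add a.toAdd b.toAdd

lemma matQ_zpow (q : ℚ) (n : ℤ) : matQ q ^ n = matQ (n * q) := by
  simpa [matQHom] using (map_zpow matQHom (.ofAdd q) n).symm

lemma matL_zpow (x : ℚ) (n : ℤ) : matL x ^ n = matL (n * x) := by
  simpa [matLHom] using (map_zpow matLHom (.ofAdd x) n).symm

lemma matA_eq_matL_one : matA = matL 1 := rfl

lemma coe_matQ_mul_matL_mul_matQ_mul_matL (x : ℚ) (hx : x ≠ 0) :
    ((matQ (x + 1) * matL (-1) * matQ ((x + 1) / x) * matL (-x) : SL2Q) : Matrix (Fin 2) (Fin 2) ℚ)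
      = -(matU x hx : Matrix (Fin 2) (Fin 2) ℚ) := by
  simp only [Matrix.SpecialLinearGroup.coe_mul]
  simp only [matQ, matL, matU, Matrix.mul_fin_two]
  ext i j
  fin_cases i <;> fin_cases j <;> simp [field]

theorem stmt6 (p : ℕ) (hp : p.Prime) (h2 : p % 3 = 2) :
    -((matU p (Nat.cast_ne_zero.mpr hp.ne_zero) : Matrix (Fin 2) (Fin 2) ℚ)) =
      (((matQ (3/p))^((p:ℤ)*((p:ℤ)+1)/3) * matA⁻¹ * (matQ (3/p))^(((p:ℤ)+1)/3) * matA^(-(p:ℤ)) :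
        SL2Q) : Matrix (Fin 2) (Fin 2) ℚ) ∧
    (matU p (Nat.cast_ne_zero.mpr hp.ne_zero))^2 ∈ Subgroup.closure {matA, matQ (3/p)} := by
  have hp0 : (p : ℚ) ≠ 0 := Nat.cast_ne_zero.mpr hp.ne_zero
  set W : SL2Q := (matQ (3/p))^((p:ℤ)*((p:ℤ)+1)/3) * matA⁻¹ * (matQ (3/p))^(((p:ℤ)+1)/3) *
    matA^(-(p:ℤ)) with hW
  obtain ⟨k, hk⟩ : (3 : ℤ) ∣ p + 1 := by omega
  have hkq : (p : ℚ) + 1 = 3 * k := by exact_mod_cast hk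
  have hword : W = matQ (p + 1) * matL (-1) * matQ ((p + 1) / p) * matL (-p) := by
    rw [hW, hk, mul_left_comm, Int.mul_ediv_cancel_left _ three_ne_zero,
      Int.mul_ediv_cancel_left _ three_ne_zero, matA_eq_matL_one, ← zpow_neg_one,
      matQ_zpow, matQ_zpow, matL_zpow, matL_zpow, hkq]
    push_cast
    congr 3 <;> field_simp
  have hU : -((matU p hp0 : Matrix (Fin 2) (Fin 2) ℚ)) = W := by
    rw [hword, coe_matQ_mul_matL_mul_matQ_mul_matL _ hp0]
  refine ⟨hU, ?_⟩
  have hA : matA ∈ Subgroup.closure {matA, matQ (3/p)} := Subgroup.subset_closure (by simp)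
  have hQ : matQ (3/p) ∈ Subgroup.closure {matA, matQ (3/p)} := Subgroup.subset_closure (by simp)
  rw [Matrix.SpecialLinearGroup.sq_eq_sq_of_coe_eq_neg (neg_eq_iff_eq_neg.mp hU)]
  exact pow_mem (mul_mem (mul_mem (mul_mem (zpow_mem hQ _) (inv_mem hA)) (zpow_mem hQ _))
    (zpow_mem hA _)) 2
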